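/- Let d ≥ 1 and let γ = (γ_1,…,γ_d) be a vector of positive real numbers. For every integer n > 0, h(n,γ) < ((n+1)/n)·(d/(d+1)). -/

import Mathlib

/-- The weight of `m ∈ ℕ^d` with respect to the weight vector `γ`. -/
noncomputable def weight (d : ℕ) (γ : Fin d → ℝ) (m : Fin d → ℕ) : ℝ :=
  ∑ i, (m i : ℝ) * γ i

/-- `h_j = #{m ∈ ℕ^d | j ≤ m·γ < j+1}`. -/
noncomputable def hcount (d : ℕ) (γ : Fin d → ℝ) (j : ℕ) : ℕ :=
  Set.ncard {m : Fin d → ℕ | (j : ℝ) ≤ weight d γ m ∧ weight d γ m < j + 1}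

/-- `h(n,γ) = (Σ_{j=0}^n j·h_j) / (n·Σ_{j=0}^n h_j)`. -/
noncomputable def hratio (d : ℕ) (γ : Fin d → ℝ) (n : ℕ) : ℝ :=
  (∑ j ∈ Finset.range (n + 1), (j : ℝ) * hcount d γ j) /
    (n * ∑ j ∈ Finset.range (n + 1), (hcount d γ j : ℝ))

/-!
Let `D = {m | m·γ < T}` with `T = n + 1`. Since `⌊m·γ⌋ ≤ m·γ`, it suffices to show
`(d + 1) Σ_{m ∈ D} m·γ < d T #D`, and this splits into one inequality per coordinate,
`Σ_{m ∈ D} m_i γ_i < Σ_{m ∈ D} (T - m·γ)`. With the other coordinates of `m` frozen, the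
admissible values of `m_i` are `0, …, L - 1`, and reflecting `m_i ↦ L - 1 - m_i` permutes `D`.
The bound then holds termwise, `m_i γ_i < T - (reflected m)·γ`, because `(L - 1) γ_i` is smaller
than the weight budget left for the `i`-th coordinate.
-/

open Finset Function

section Weight

variable {d : ℕ} {γ : Fin d → ℝ}

lemma weight_nonneg (hγ : ∀ i, 0 ≤ γ i) (m : Fin d → ℕ) : 0 ≤ weight d γ m :=
  sum_nonneg fun i _ => mul_nonneg (Nat.cast_nonneg _) (hγ i)

lemma weight_zero : weight d γ 0 = 0 := by
  simp [weight]

lemma weight_update (m : Fin d → ℕ) (i : Fin d) (k : ℕ) :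
    weight d γ (update m i k) = weight d γ m + ((k : ℝ) - m i) * γ i := by
  simp only [weight, apply_update (fun j (x : ℕ) => (x : ℝ) * γ j),
    sum_update_of_mem (mem_univ i), sum_eq_add_sum_sdiff_singleton_of_mem (mem_univ i)]
  ring

lemma finite_setOf_weight_lt (hγ : ∀ i, 0 < γ i) (T : ℝ) :
    {m : Fin d → ℕ | weight d γ m < T}.Finite := by
  refine (Set.finite_Iic fun i => ⌈T / γ i⌉₊).subset fun m hm i => ?_
  have hmi : (m i : ℝ) * γ i ≤ weight d γ m :=
    single_le_sum (f := fun j => (m j : ℝ) * γ j)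
      (fun j _ => mul_nonneg (Nat.cast_nonneg _) (hγ j).le) (mem_univ i)
  have : (m i : ℝ) ≤ T / γ i := by
    rw [le_div_iff₀ (hγ i)]
    exact hmi.trans (le_of_lt hm)
  exact_mod_cast this.trans (Nat.le_ceil _)

end Weight

section Reflection

variable {d : ℕ} (γ : Fin d → ℝ) (T : ℝ) (i : Fin d)

/-- The number of values of `m i` that keep the weight below `T`, the other coordinates of `m`
being fixed. -/
noncomputable def fiberLength (m : Fin d → ℕ) : ℕ :=
  ⌈(T - (weight d γ m - m i * γ i)) / γ i⌉₊

noncomputable def reflectCoord (m : Fin d → ℕ) : Fin d → ℕ :=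
  update m i (fiberLength γ T i m - 1 - m i)

variable {γ T i}

lemma lt_fiberLength_iff (hγi : 0 < γ i) (m : Fin d → ℕ) :
    m i < fiberLength γ T i m ↔ weight d γ m < T := by
  rw [fiberLength, Nat.lt_ceil, lt_div_iff₀ hγi]
  constructor <;> intro h <;> linarith

lemma reflectCoord_apply_self (m : Fin d → ℕ) :
    reflectCoord γ T i m i = fiberLength γ T i m - 1 - m i :=
  update_self ..

lemma fiberLength_reflectCoord (m : Fin d → ℕ) :
    fiberLength γ T i (reflectCoord γ T i m) = fiberLength γ T i m := by
  have h : weight d γ (reflectCoord γ T i m) - reflectCoord γ T i m i * γ i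
      = weight d γ m - m i * γ i := by
    rw [reflectCoord, weight_update, update_self]
    ring
  unfold fiberLength
  rw [h]

lemma reflectCoord_reflectCoord {m : Fin d → ℕ} (hm : m i < fiberLength γ T i m) :
    reflectCoord γ T i (reflectCoord γ T i m) = m := by
  set L := fiberLength γ T i m
  calc reflectCoord γ T i (reflectCoord γ T i m) = update m i (L - 1 - (L - 1 - m i)) := by
        rw [reflectCoord, fiberLength_reflectCoord, reflectCoord_apply_self, reflectCoord,
          update_idem]
    _ = m := by rw [show L - 1 - (L - 1 - m i) = m i by omega, update_eq_self]

lemma weight_reflectCoord_lt (hγi : 0 < γ i) {m : Fin d → ℕ} (hm : weight d γ m < T) :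
    weight d γ (reflectCoord γ T i m) < T := by
  have hL := (lt_fiberLength_iff hγi m).2 hm
  rw [← lt_fiberLength_iff hγi, fiberLength_reflectCoord, reflectCoord_apply_self]
  omega

lemma coord_mul_lt_sub_weight_reflectCoord (hγi : 0 < γ i) {m : Fin d → ℕ}
    (hm : weight d γ m < T) :
    (m i : ℝ) * γ i < T - weight d γ (reflectCoord γ T i m) := by
  set R := T - (weight d γ m - m i * γ i)
  set L := fiberLength γ T i m
  have hmL : m i + 1 ≤ L := (lt_fiberLength_iff hγi m).2 hm
  have hR : 0 ≤ R := by
    have := mul_nonneg (Nat.cast_nonneg (α := ℝ) (m i)) hγi.le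
    linarith
  -- `L = ⌈R / γ i⌉₊`, so `(L - 1) γ_i < R`.
  have hLR : ((L : ℝ) - 1) * γ i < R := by
    have : (L : ℝ) < R / γ i + 1 := Nat.ceil_lt_add_one (div_nonneg hR hγi.le)
    rw [← lt_div_iff₀ hγi]
    linarith
  rw [reflectCoord, weight_update, show L - 1 - m i = L - (m i + 1) by omega,
    Nat.cast_sub hmL]
  push_cast
  linarith

variable (i) in
theorem sum_coord_mul_lt_sum_sub_weight (hγi : 0 < γ i) (hT : 0 < T)
    {D : Finset (Fin d → ℕ)} (hD : ∀ m, m ∈ D ↔ weight d γ m < T) :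
    ∑ m ∈ D, (m i : ℝ) * γ i < ∑ m ∈ D, (T - weight d γ m) := by
  have h0 : 0 ∈ D := (hD 0).2 (by rwa [weight_zero])
  have hmaps : ∀ m ∈ D, reflectCoord γ T i m ∈ D := fun m hm =>
    (hD _).2 (weight_reflectCoord_lt hγi ((hD m).1 hm))
  have hinv : ∀ m ∈ D, reflectCoord γ T i (reflectCoord γ T i m) = m := fun m hm =>
    reflectCoord_reflectCoord ((lt_fiberLength_iff hγi m).2 ((hD m).1 hm))
  calc ∑ m ∈ D, (m i : ℝ) * γ i
      < ∑ m ∈ D, (T - weight d γ (reflectCoord γ T i m)) :=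
        sum_lt_sum_of_nonempty ⟨0, h0⟩ fun m hm =>
          coord_mul_lt_sub_weight_reflectCoord hγi ((hD m).1 hm)
    _ = ∑ m ∈ D, (T - weight d γ m) :=
        sum_nbij' _ _ hmaps hmaps hinv hinv fun _ _ => rfl

end Reflection

section Sublevel

variable {d : ℕ} {γ : Fin d → ℝ}

theorem succ_mul_sum_weight_lt (hd : 0 < d) (hγ : ∀ i, 0 < γ i) {T : ℝ} (hT : 0 < T)
    {D : Finset (Fin d → ℕ)} (hD : ∀ m, m ∈ D ↔ weight d γ m < T) :
    ((d : ℝ) + 1) * ∑ m ∈ D, weight d γ m < d * T * #D := by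
  have h := sum_lt_sum_of_nonempty (univ_nonempty_iff.2 ⟨⟨0, hd⟩⟩) fun i _ =>
    sum_coord_mul_lt_sum_sub_weight i (hγ i) hT hD
  rw [sum_comm] at h
  simp only [sum_const, card_univ, Fintype.card_fin, nsmul_eq_mul, sum_sub_distrib] at h
  change ∑ m ∈ D, weight d γ m < _ at h
  linarith

variable {n : ℕ} {D : Finset (Fin d → ℕ)}

lemma hcount_eq_card_filter (hγ : ∀ i, 0 ≤ γ i) (hD : ∀ m, m ∈ D ↔ weight d γ m < n + 1)
    {j : ℕ} (hj : j ≤ n) : hcount d γ j = #{m ∈ D | ⌊weight d γ m⌋₊ = j} := by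
  rw [hcount, ← Set.ncard_coe_finset]
  congr 1
  ext m
  have hjn : (j : ℝ) ≤ n := by exact_mod_cast hj
  simp only [Set.mem_ofPred_eq, coe_filter, hD, Nat.floor_eq_iff (weight_nonneg hγ m)]
  constructor
  · rintro ⟨h1, h2⟩
    exact ⟨by linarith, h1, h2⟩
  · exact fun h => h.2

lemma sum_range_mul_hcount (hγ : ∀ i, 0 ≤ γ i) (hD : ∀ m, m ∈ D ↔ weight d γ m < n + 1)
    (f : ℕ → ℝ) :
    ∑ j ∈ range (n + 1), f j * hcount d γ j = ∑ m ∈ D, f ⌊weight d γ m⌋₊ := by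
  have hmaps : ∀ m ∈ D, ⌊weight d γ m⌋₊ ∈ range (n + 1) := fun m hm => by
    rw [mem_range, Nat.floor_lt (weight_nonneg hγ m)]
    exact_mod_cast (hD m).1 hm
  rw [← sum_fiberwise_of_maps_to hmaps]
  refine sum_congr rfl fun j hj => ?_
  rw [hcount_eq_card_filter hγ hD (Nat.lt_succ_iff.1 (mem_range.1 hj)),
    sum_congr rfl fun m hm => by rw [(mem_filter.1 hm).2], sum_const, nsmul_eq_mul, mul_comm]

lemma hratio_eq (hγ : ∀ i, 0 ≤ γ i) (hD : ∀ m, m ∈ D ↔ weight d γ m < n + 1) :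
    hratio d γ n = (∑ m ∈ D, (⌊weight d γ m⌋₊ : ℝ)) / (n * #D) := by
  have hcard := sum_range_mul_hcount hγ hD fun _ => 1
  simp only [one_mul, sum_const, nsmul_eq_mul, mul_one] at hcard
  rw [hratio, sum_range_mul_hcount hγ hD Nat.cast, hcard]

end Sublevel

theorem stmt_2 (d : ℕ) (hd : 1 ≤ d) (γ : Fin d → ℝ) (hγ : ∀ i, 0 < γ i)
    (n : ℕ) (hn : 0 < n) :
    hratio d γ n < ((n + 1) / n) * (d / (d + 1)) := by
  have hγ₀ : ∀ i, 0 ≤ γ i := fun i => (hγ i).le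
  have hT : (0 : ℝ) < n + 1 := by positivity
  set D := (finite_setOf_weight_lt hγ ((n : ℝ) + 1)).toFinset
  have hD : ∀ m, m ∈ D ↔ weight d γ m < n + 1 := fun m => Set.Finite.mem_toFinset _
  have hDpos : 0 < #D := card_pos.2 ⟨0, (hD 0).2 (by rwa [weight_zero])⟩
  have hsum := succ_mul_sum_weight_lt hd hγ hT hD
  rw [hratio_eq hγ₀ hD, div_lt_iff₀ (by positivity),
    show ((n + 1) / n * (d / (d + 1)) * (n * #D) : ℝ) = d * (n + 1) * #D / (d + 1) by
      field_simp,
    lt_div_iff₀ (by positivity)]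
  calc (∑ m ∈ D, (⌊weight d γ m⌋₊ : ℝ)) * (d + 1)
      ≤ (∑ m ∈ D, weight d γ m) * (d + 1) := by
        gcongr with m
        exact Nat.floor_le (weight_nonneg hγ₀ m)
    _ < d * (n + 1) * #D := by linarith
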